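/- Let ρ, σ be invertible density operators and M := ρ^{-1/2}√(ρ^{1/2} σ ρ^{1/2})ρ^{-1/2}. If there exists c ∈ (0,1) such that the spectrum of M equals {c, 1/c} and M commutes with ρ − σ, then T(ρ,σ) = √(1 − F(ρ,σ)²). -/

import Mathlib

open Matrix
open scoped ComplexOrder

/-- `Matrix.PosSemidef.sqrt` (removed from Mathlib), with its former definition. -/
noncomputable def Matrix.PosSemidef.sqrt {n 𝕜 : Type*} [Fintype n] [DecidableEq n] [RCLike 𝕜]
    {A : Matrix n n 𝕜} (hA : A.PosSemidef) : Matrix n n 𝕜 :=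
  hA.1.eigenvectorUnitary.1 * diagonal ((↑) ∘ (Real.sqrt ∘ hA.1.eigenvalues)) *
  (star hA.1.eigenvectorUnitary : Matrix n n 𝕜)

/-- The trace norm of a (square complex) matrix: `‖A‖₁ = tr √(Aᴴ A)`. -/
noncomputable def traceNorm {n : ℕ} (A : Matrix (Fin n) (Fin n) ℂ) : ℝ :=
  ((Matrix.posSemidef_conjTranspose_mul_self A).sqrt).trace.re

/-!
Since `M` is Hermitian with spectrum `{c, c⁻¹}`, it is `c P + c⁻¹ (1 - P)` for an orthogonal
projection `P`, and `σ = M ρ M`. As `c c⁻¹ = 1`, the off-diagonal blocks of `ρ - M ρ M` cancel: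
`ρ - σ = (1 - c²) PρP - (c⁻² - 1) P'ρP'` with `P' = 1 - P`, a difference of positive matrices
with orthogonal supports, so `‖ρ - σ‖₁ = (1 - c²) p + (c⁻² - 1) q` where `p = tr Pρ`,
`q = tr P'ρ`. The fidelity is `tr N = tr Mρ = c p + c⁻¹ q`. The trace conditions
`p + q = 1 = c² p + c⁻² q` give `p = 1 / (1 + c²)` and `q = c² / (1 + c²)`, hence
`T = (1 - c²) / (1 + c²)` and `F = 2c / (1 + c²)`, so that `T² + F² = 1`.
-/

namespace Matrix

variable {ι 𝕜 : Type*} [Fintype ι] [DecidableEq ι] [RCLike 𝕜] {A : Matrix ι ι 𝕜}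

namespace PosSemidef

open scoped MatrixOrder

lemma sqrt_eq_cfcSqrt (hA : A.PosSemidef) : hA.sqrt = CFC.sqrt A := by
  rw [CFC.sqrt_eq_cfc, cfc_nnreal_eq_real _ A hA.nonneg, hA.1.cfc_eq]
  simp only [IsHermitian.cfc, PosSemidef.sqrt, Unitary.conjStarAlgAut_apply]
  congr 3
  ext i
  simp [Real.coe_sqrt, max_eq_left (hA.eigenvalues_nonneg i)]

lemma posSemidef_sqrt (hA : A.PosSemidef) : hA.sqrt.PosSemidef := by
  rw [hA.sqrt_eq_cfcSqrt]
  exact (CFC.sqrt_nonneg A).posSemidef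

lemma sqrt_mul_self (hA : A.PosSemidef) : hA.sqrt * hA.sqrt = A := by
  rw [hA.sqrt_eq_cfcSqrt]
  exact CFC.sqrt_mul_sqrt_self A hA.nonneg

lemma eq_sqrt_of_mul_self_eq (hA : A.PosSemidef) {B : Matrix ι ι 𝕜} (hB : B.PosSemidef)
    (h : B * B = A) : B = hA.sqrt := by
  rw [hA.sqrt_eq_cfcSqrt, ← h, CFC.sqrt_mul_self B hB.nonneg]

end PosSemidef

lemma PosDef.isUnit_sqrt (hA : A.PosDef) : IsUnit hA.posSemidef.sqrt :=
  isUnit_of_mul_isUnit_left (hA.posSemidef.sqrt_mul_self ▸ hA.isUnit)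

section Riccati

variable {R : Type*} [CommRing R] {P N σ : Matrix ι ι R}

lemma nonsing_inv_conj_mul_mul_self_mul_eq (hP : IsUnit P.det) (h : N * N = P * σ * P) :
    (P⁻¹ * N * P⁻¹) * (P * P) * (P⁻¹ * N * P⁻¹) = σ := by
  calc (P⁻¹ * N * P⁻¹) * (P * P) * (P⁻¹ * N * P⁻¹)
      = P⁻¹ * (N * (P⁻¹ * P) * (P * P⁻¹) * N) * P⁻¹ := by simp only [mul_assoc]
    _ = σ := by
        rw [nonsing_inv_mul _ hP, mul_nonsing_inv _ hP, mul_one, mul_one, h, mul_assoc,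
          mul_nonsing_inv_cancel_right _ _ hP, nonsing_inv_mul_cancel_left _ _ hP]

lemma trace_nonsing_inv_conj_mul_mul_self (hP : IsUnit P.det) :
    (P⁻¹ * N * P⁻¹ * (P * P)).trace = N.trace := by
  simp only [mul_assoc]
  rw [nonsing_inv_mul_cancel_left _ _ hP, trace_mul_comm, mul_nonsing_inv_cancel_right _ _ hP]

end Riccati

end Matrix

open Matrix

lemma IsIdempotentElem.trace_mul_mul_self {ι R : Type*} [Fintype ι] [CommSemiring R]
    {P : Matrix ι ι R} (hP : IsIdempotentElem P) (X : Matrix ι ι R) :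
    (P * X * P).trace = (P * X).trace := by
  rw [trace_mul_cycle, hP.eq]

lemma spectrum_real_subset_of_spectrum_complex_eq {A : Type*} [Ring A] [Algebra ℝ A]
    [Algebra ℂ A] [IsScalarTower ℝ ℂ A] {a : A} {x y : ℝ}
    (h : spectrum ℂ a = {(x : ℂ), (y : ℂ)}) : spectrum ℝ a ⊆ {x, y} := fun t ht ↦ by
  have htℂ := spectrum.algebraMap_mem ℂ ht
  rw [h] at htℂ
  simpa only [Set.mem_insert_iff, Set.mem_singleton_iff, Complex.coe_algebraMap,
    Complex.ofReal_inj] using htℂ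

lemma IsSelfAdjoint.exists_isStarProjection_of_spectrum_subset_pair
    {A : Type*} [Ring A] [StarRing A] [Algebra ℝ A] [TopologicalSpace A]
    [ContinuousFunctionalCalculus ℝ A IsSelfAdjoint]
    {a : A} (ha : IsSelfAdjoint a) {x y : ℝ} (h : spectrum ℝ a ⊆ {x, y}) :
    ∃ p : A, IsStarProjection p ∧ a = x • p + y • (1 - p) := by
  set f : ℝ → ℝ := fun t ↦ (y - t) / (y - x)
  have hf : ∀ t ∈ spectrum ℝ a, f t * f t = f t ∧ x * f t + y * (1 - f t) = t := by
    intro t ht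
    rcases h ht with rfl | rfl
    · rcases eq_or_ne t y with rfl | hty
      · simp [f]
      · simp [f, div_self (sub_ne_zero.mpr hty.symm)]
    · simp [f]
  have hfc : ContinuousOn f (spectrum ℝ a) := by fun_prop
  refine ⟨cfc f a, ⟨?_, cfc_predicate f a⟩, ?_⟩
  · rw [IsIdempotentElem, ← cfc_mul f f a]
    exact cfc_congr fun t ht ↦ (hf t ht).1
  · calc a = cfc (fun t ↦ x * f t + y * (1 - f t)) a :=
          (cfc_id' ℝ a).symm.trans (cfc_congr fun t ht ↦ (hf t ht).2.symm)
      _ = x • cfc f a + y • (1 - cfc f a) := by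
          rw [cfc_add .., cfc_const_mul .., cfc_const_mul .., cfc_sub .., cfc_const_one ℝ a]

-- The cross terms `p x q` and `q x p` cancel because `a b = 1`.
lemma sub_smul_add_smul_mul_mul_smul_add_smul {R A : Type*} [CommRing R] [Ring A] [Algebra R A]
    {p q : A} (hpq : p + q = 1) {a b : R} (hab : a * b = 1) (x : A) :
    x - (a • p + b • q) * x * (a • p + b • q) =
      (1 - a ^ 2) • (p * x * p) - (b ^ 2 - 1) • (q * x * q) := by
  have hx : x = (p + q) * x * (p + q) := by rw [hpq, one_mul, mul_one]
  nth_rewrite 1 [hx]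
  simp only [add_mul, mul_add, smul_mul_assoc, mul_smul_comm]
  match_scalars <;> simp [mul_comm b a, hab, sq]

section TraceNorm

variable {n : ℕ}

lemma traceNorm_eq_re_trace_of_mul_self_eq {A E : Matrix (Fin n) (Fin n) ℂ} (hE : E.PosSemidef)
    (h : E * E = Aᴴ * A) : traceNorm A = E.trace.re := by
  rw [traceNorm, ← (posSemidef_conjTranspose_mul_self A).eq_sqrt_of_mul_self_eq hE h]

lemma traceNorm_sub_eq_of_mul_eq_zero {X Y : Matrix (Fin n) (Fin n) ℂ} (hX : X.PosSemidef)
    (hY : Y.PosSemidef) (hXY : X * Y = 0) : traceNorm (X - Y) = (X.trace + Y.trace).re := by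
  have hYX : Y * X = 0 := by
    simpa [hX.1.eq, hY.1.eq] using congrArg conjTranspose hXY
  rw [← trace_add]
  refine traceNorm_eq_re_trace_of_mul_self_eq (hX.add hY) ?_
  rw [conjTranspose_sub, hX.1.eq, hY.1.eq]
  simp only [add_mul, mul_add, sub_mul, mul_sub, hXY, hYX]
  abel

lemma traceNorm_eq_re_trace_of_mul_self_eq_mul_conjTranspose {A N : Matrix (Fin n) (Fin n) ℂ}
    (hA : IsUnit A) (hN : N.PosSemidef) (h : N * N = A * Aᴴ) : traceNorm A = N.trace.re := by
  set W := (posSemidef_conjTranspose_mul_self A).sqrt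
  have hWW : W * W = Aᴴ * A := (posSemidef_conjTranspose_mul_self A).sqrt_mul_self
  have hW : IsUnit W.det :=
    (isUnit_iff_isUnit_det W).mp (isUnit_of_mul_isUnit_left (hWW ▸ hA.star.mul hA))
  -- `A W⁻¹ Aᴴ` is a positive square root of `A Aᴴ`, hence equal to `N`, and has trace `tr W`.
  have hZ : (A * W⁻¹ * Aᴴ) * (A * W⁻¹ * Aᴴ) = A * Aᴴ := by
    calc (A * W⁻¹ * Aᴴ) * (A * W⁻¹ * Aᴴ) = A * (W⁻¹ * (Aᴴ * A) * W⁻¹) * Aᴴ := by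
          simp only [mul_assoc]
      _ = A * Aᴴ := by
          rw [← hWW, nonsing_inv_mul_cancel_left _ _ hW, mul_nonsing_inv _ hW, mul_one]
  have hNZ : N = A * W⁻¹ * Aᴴ :=
    ((posSemidef_self_mul_conjTranspose A).eq_sqrt_of_mul_self_eq hN h).trans
      ((posSemidef_self_mul_conjTranspose A).eq_sqrt_of_mul_self_eq
        ((posSemidef_conjTranspose_mul_self A).posSemidef_sqrt.inv.mul_mul_conjTranspose_same A)
        hZ).symm
  change W.trace.re = N.trace.re
  rw [hNZ, trace_mul_cycle, ← hWW, mul_assoc, mul_nonsing_inv _ hW, mul_one]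

lemma traceNorm_sqrt_mul_sqrt_eq_re_trace {ρ σ N : Matrix (Fin n) (Fin n) ℂ} (hρ : ρ.PosDef)
    (hσ : σ.PosDef) (hN : N.PosSemidef)
    (h : N * N = hρ.posSemidef.sqrt * σ * hρ.posSemidef.sqrt) :
    traceNorm (hρ.posSemidef.sqrt * hσ.posSemidef.sqrt) = N.trace.re := by
  set R := hρ.posSemidef.sqrt
  set S := hσ.posSemidef.sqrt
  have hSS : S * S = σ := hσ.posSemidef.sqrt_mul_self
  refine traceNorm_eq_re_trace_of_mul_self_eq_mul_conjTranspose
    (hρ.isUnit_sqrt.mul hσ.isUnit_sqrt) hN ?_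
  rw [conjTranspose_mul, hσ.posSemidef.posSemidef_sqrt.1.eq, hρ.posSemidef.posSemidef_sqrt.1.eq,
    h, show R * S * (S * R) = R * (S * S) * R by simp only [mul_assoc], hSS]

variable {P ρ : Matrix (Fin n) (Fin n) ℂ}

lemma trace_smul_sub_smul_of_isIdempotentElem (hP : IsIdempotentElem P) (s t : ℝ) :
    (s • (P * ρ * P) - t • ((1 - P) * ρ * (1 - P))).trace =
      s • (P * ρ).trace - t • ((1 - P) * ρ).trace := by
  rw [trace_sub, trace_smul, trace_smul, hP.trace_mul_mul_self, hP.one_sub.trace_mul_mul_self]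

lemma traceNorm_smul_sub_smul_of_isStarProjection (hP : IsStarProjection P)
    (hρ : ρ.PosSemidef) {s t : ℝ} (hs : 0 ≤ s) (ht : 0 ≤ t) :
    traceNorm (s • (P * ρ * P) - t • ((1 - P) * ρ * (1 - P))) =
      s * (P * ρ).trace.re + t * ((1 - P) * ρ).trace.re := by
  have hQ := hP.one_sub
  have hPρP : (P * ρ * P).PosSemidef := by
    have h := hρ.conjTranspose_mul_mul_same P
    rwa [hP.isSelfAdjoint.isHermitian.eq] at h
  have hQρQ : ((1 - P) * ρ * (1 - P)).PosSemidef := by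
    have h := hρ.conjTranspose_mul_mul_same (1 - P)
    have hQh : (1 - P)ᴴ = 1 - P := hQ.isSelfAdjoint.isHermitian.eq
    rwa [hQh] at h
  have hPQ : (P * ρ * P) * ((1 - P) * ρ * (1 - P)) = 0 := by
    simp only [mul_assoc]
    rw [← mul_assoc P (1 - P), hP.mul_one_sub_self, zero_mul, mul_zero, mul_zero]
  rw [traceNorm_sub_eq_of_mul_eq_zero (hPρP.smul hs) (hQρQ.smul ht) (by simp [hPQ]),
    trace_smul, trace_smul, hP.isIdempotentElem.trace_mul_mul_self,
    hQ.isIdempotentElem.trace_mul_mul_self]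
  simp

end TraceNorm

lemma half_add_eq_sqrt_one_sub_sq {c p q : ℝ} (hc : c ∈ Set.Ioo (0 : ℝ) 1) (hpq : p + q = 1)
    (hbal : (1 - c ^ 2) * p = (c⁻¹ ^ 2 - 1) * q) :
    1 / 2 * ((1 - c ^ 2) * p + (c⁻¹ ^ 2 - 1) * q) = √(1 - (c * p + c⁻¹ * q) ^ 2) := by
  obtain ⟨hc0, hc1⟩ := hc
  have h1c : 0 < 1 - c ^ 2 := by nlinarith
  have hq : q = c ^ 2 * p := by
    have hc2 : c⁻¹ ^ 2 * c ^ 2 = 1 := by field_simp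
    have h : (1 - c ^ 2) * (q - c ^ 2 * p) = 0 := by
      linear_combination (-c ^ 2) * hbal - q * hc2
    linarith [(mul_eq_zero.mp h).resolve_left h1c.ne']
  have hp : p = 1 / (1 + c ^ 2) := by
    field_simp
    linear_combination hpq - hq
  subst hq hp
  have hT : 1 / 2 * ((1 - c ^ 2) * (1 / (1 + c ^ 2)) + (c⁻¹ ^ 2 - 1) * (c ^ 2 * (1 / (1 + c ^ 2))))
      = (1 - c ^ 2) / (1 + c ^ 2) := by
    field_simp
    ring
  have hF : c * (1 / (1 + c ^ 2)) + c⁻¹ * (c ^ 2 * (1 / (1 + c ^ 2))) = 2 * c / (1 + c ^ 2) := by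
    field_simp
    ring
  have hsq : 1 - (2 * c / (1 + c ^ 2)) ^ 2 = ((1 - c ^ 2) / (1 + c ^ 2)) ^ 2 := by
    field_simp
    ring
  rw [hT, hF, hsq, Real.sqrt_sq (by positivity)]

lemma half_traceNorm_sub_mul_mul_eq_sqrt_one_sub_sq {n : ℕ} {P ρ M : Matrix (Fin n) (Fin n) ℂ}
    (hP : IsStarProjection P) (hρ : ρ.PosSemidef) (hρtr : ρ.trace = 1) {c : ℝ}
    (hc : c ∈ Set.Ioo (0 : ℝ) 1) (hMP : M = c • P + c⁻¹ • (1 - P))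
    (hσtr : (M * ρ * M).trace = 1) :
    1 / 2 * traceNorm (ρ - M * ρ * M) = √(1 - (M * ρ).trace.re ^ 2) := by
  set p := (P * ρ).trace.re
  set q := ((1 - P) * ρ).trace.re
  have hdiff : ρ - M * ρ * M =
      (1 - c ^ 2) • (P * ρ * P) - (c⁻¹ ^ 2 - 1) • ((1 - P) * ρ * (1 - P)) := by
    rw [hMP]
    exact sub_smul_add_smul_mul_mul_smul_add_smul (add_sub_cancel P 1)
      (mul_inv_cancel₀ hc.1.ne') ρ
  have hT : traceNorm (ρ - M * ρ * M) = (1 - c ^ 2) * p + (c⁻¹ ^ 2 - 1) * q := by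
    rw [hdiff]
    exact traceNorm_smul_sub_smul_of_isStarProjection hP hρ
      (by nlinarith [hc.1, hc.2]) (by nlinarith [(one_le_inv₀ hc.1).mpr hc.2.le])
  have hF : (M * ρ).trace.re = c * p + c⁻¹ * q := by
    simp [hMP, add_mul, p, q]
  have hpq : p + q = 1 := by
    rw [← Complex.add_re, ← trace_add, ← add_mul, add_sub_cancel, one_mul, hρtr, Complex.one_re]
  have hbal : (1 - c ^ 2) * p = (c⁻¹ ^ 2 - 1) * q := by
    have h := congrArg (fun X ↦ X.trace.re) hdiff
    simp only [trace_sub, hρtr, hσtr, sub_self, trace_smul_sub_smul_of_isIdempotentElem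
      hP.isIdempotentElem, Complex.sub_re, Complex.smul_re, smul_eq_mul, Complex.zero_re] at h
    linarith
  rw [hT, hF]
  exact half_add_eq_sqrt_one_sub_sq hc hpq hbal

theorem fvdg_upper_saturation_sufficient_general {n : ℕ}
    (ρ σ N : Matrix (Fin n) (Fin n) ℂ)
    (hρ : ρ.PosDef) (hσ : σ.PosDef)
    (hρtr : ρ.trace = 1) (hσtr : σ.trace = 1)
    (hN : N.PosSemidef)
    (hN2 : N * N = hρ.posSemidef.sqrt * σ * hρ.posSemidef.sqrt)
    (M : Matrix (Fin n) (Fin n) ℂ)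
    (hM : M = (hρ.posSemidef.sqrt)⁻¹ * N * (hρ.posSemidef.sqrt)⁻¹)
    (c : ℝ) (hc : c ∈ Set.Ioo (0 : ℝ) 1)
    (hspec : spectrum ℂ M = {(c : ℂ), ((c : ℂ))⁻¹}) :
    (1 / 2) * traceNorm (ρ - σ) =
      Real.sqrt (1 - (traceNorm (hρ.posSemidef.sqrt * hσ.posSemidef.sqrt)) ^ 2) := by
  set R := hρ.posSemidef.sqrt
  have hR : IsUnit R.det := (isUnit_iff_isUnit_det R).mp hρ.isUnit_sqrt
  have hRR : R * R = ρ := hρ.posSemidef.sqrt_mul_self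
  have hσM : M * ρ * M = σ := hM ▸ hRR ▸ nonsing_inv_conj_mul_mul_self_mul_eq hR hN2
  have hF : traceNorm (R * hσ.posSemidef.sqrt) = (M * ρ).trace.re := by
    rw [traceNorm_sqrt_mul_sqrt_eq_re_trace hρ hσ hN hN2, hM, ← hRR,
      trace_nonsing_inv_conj_mul_mul_self hR]
  have hMh : M.IsHermitian := by
    have hRinv : R⁻¹ᴴ = R⁻¹ := hρ.posSemidef.posSemidef_sqrt.1.inv.eq
    simpa only [← hM, hRinv] using isHermitian_mul_mul_conjTranspose R⁻¹ hN.1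
  obtain ⟨P, hP, hMP⟩ := hMh.isSelfAdjoint.exists_isStarProjection_of_spectrum_subset_pair
    (spectrum_real_subset_of_spectrum_complex_eq (x := c) (y := c⁻¹)
      (by rw [hspec, Complex.ofReal_inv]))
  rw [hF, ← hσM]
  exact half_traceNorm_sub_mul_mul_eq_sqrt_one_sub_sq hP hρ.posSemidef hρtr hc hMP (hσM ▸ hσtr)

/-- For invertible density operators `ρ, σ` with geometric mean
`M = ρ^{-1/2} N ρ^{-1/2}` (where `N` is the positive square root of
`ρ^{1/2} σ ρ^{1/2}`): if `spec(M) = {c, 1/c}` for some `c ∈ (0,1)` and `M` commutes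
with `ρ - σ`, then the upper Fuchs–van de Graaf inequality is saturated. -/
theorem fvdg_upper_saturation_sufficient {n : ℕ}
    (ρ σ N : Matrix (Fin n) (Fin n) ℂ)
    (hρ : ρ.PosDef) (hσ : σ.PosDef)
    (hρtr : ρ.trace = 1) (hσtr : σ.trace = 1)
    (hN : N.PosSemidef)
    (hN2 : N * N = hρ.posSemidef.sqrt * σ * hρ.posSemidef.sqrt)
    (M : Matrix (Fin n) (Fin n) ℂ)
    (hM : M = (hρ.posSemidef.sqrt)⁻¹ * N * (hρ.posSemidef.sqrt)⁻¹)
    (c : ℝ) (hc : c ∈ Set.Ioo (0 : ℝ) 1)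
    (hspec : spectrum ℂ M = {(c : ℂ), ((c : ℂ))⁻¹})
    (hcomm : M * (ρ - σ) = (ρ - σ) * M) :
    (1 / 2) * traceNorm (ρ - σ) =
      Real.sqrt (1 - (traceNorm (hρ.posSemidef.sqrt * hσ.posSemidef.sqrt)) ^ 2) :=
  fvdg_upper_saturation_sufficient_general ρ σ N hρ hσ hρtr hσtr hN hN2 M hM c hc hspec
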